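/- arXiv:2312.10338 — 3 statements merged into one kernel-verified Lean document; each statement's English description precedes it below -/
import Mathlib

section
/- Let p₁, p₂, p₃ be affinely independent points in the Euclidean plane ℝ², let L be the affine span of {p₁, p₂}, and let b₃(x) denote the barycentric coordinate of x with respect to the vertex p₃ of the triangle. If x_o, x_n ∈ ℝ² are points whose connecting segment meets L (there exists t ∈ [0,1] with (1−t) • x_o + t • x_n ∈ L), then |b₃(x_n)| ≤ ‖x_n − x_o‖ / dist(p₃, L). -/
/-!
Writing `x_n = z + c₂ • (p₂ - p₀)` with `z` on the line `L`, the point `x_n` is the image of `p₂`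
under a homothety of ratio `c₂` followed by a translation, both preserving `L`; hence
`|c₂| · dist(p₂, L) ≤ dist(x_n, L)`. Since the segment from `x_o` to `x_n` meets `L`,
`dist(x_n, L) ≤ ‖x_n - x_o‖`.
-/

theorem AffineSubspace.norm_mul_infDist_le_infDist_add_smul_sub
    {𝕜 E : Type*} [NormedField 𝕜] [NormedAddCommGroup E] [NormedSpace 𝕜 E]
    {L : AffineSubspace 𝕜 E} {o z : E} (ho : o ∈ L) (hz : z ∈ L) (p : E) (c : 𝕜) :
    ‖c‖ * Metric.infDist p L ≤ Metric.infDist (z + c • (p - o)) L := by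
  rcases eq_or_ne c 0 with rfl | hc
  · simpa using Metric.infDist_nonneg
  refine (Metric.le_infDist ⟨z, hz⟩).2 fun w hw => ?_
  -- `w` is the image of this point of `L` under `q ↦ z + c • (q - o)`
  have hw' : c⁻¹ • (w - z) + o ∈ L :=
    L.vadd_mem_of_mem_direction (L.direction.smul_mem c⁻¹ (L.vsub_mem_direction hw hz)) ho
  calc ‖c‖ * Metric.infDist p L ≤ ‖c‖ * dist p (c⁻¹ • (w - z) + o) :=
        mul_le_mul_of_nonneg_left (Metric.infDist_le_dist_of_mem hw') (norm_nonneg c)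
    _ = dist (z + c • (p - o)) w := by
        rw [dist_eq_norm, dist_eq_norm, ← norm_smul, smul_sub, smul_add, smul_inv_smul₀ hc]
        congr 1
        module

theorem Metric.infDist_le_dist_of_mem_segment_of_mem
    {E : Type*} [NormedAddCommGroup E] [NormedSpace ℝ E] {s : Set E} {x y z : E}
    (hz : z ∈ segment ℝ x y) (hzs : z ∈ s) : infDist y s ≤ dist x y :=
  calc infDist y s ≤ dist y z := infDist_le_dist_of_mem hzs
    _ ≤ dist x z + dist z y := by rw [dist_comm y z]; exact le_add_of_nonneg_left dist_nonneg
    _ = dist x y := dist_add_dist_of_mem_segment hz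

/-- Quantitative local diminishing of the far-vertex barycentric coordinate
(Proposition 2): if `p 0, p 1, p 2` are affinely independent points of the plane,
`L` is the affine span of `{p 0, p 1}`, and the segment from `x_o` to `x_n` meets `L`,
then any barycentric coefficients `c` representing `x_n` with respect to `p`
satisfy `|c 2| ≤ ‖x_n − x_o‖ / dist(p 2, L)`. -/
theorem barycentric_far_vertex_diminishes_on_edge_crossing
    (p : Fin 3 → EuclideanSpace ℝ (Fin 2))
    (hp : AffineIndependent ℝ p)
    (L : AffineSubspace ℝ (EuclideanSpace ℝ (Fin 2)))
    (hL : L = affineSpan ℝ {p 0, p 1})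
    (xo xn : EuclideanSpace ℝ (Fin 2))
    (hseg : ∃ t ∈ Set.Icc (0 : ℝ) 1, (1 - t) • xo + t • xn ∈ L)
    (c : Fin 3 → ℝ)
    (hc1 : ∑ i, c i = 1)
    (hcx : Finset.univ.affineCombination ℝ p c = xn) :
    |c 2| ≤ ‖xn - xo‖ / Metric.infDist (p 2) (L : Set (EuclideanSpace ℝ (Fin 2))) := by
  obtain ⟨t, ⟨ht0, ht1⟩, hyL⟩ := hseg
  have hp0 : p 0 ∈ L := hL ▸ left_mem_affineSpan_pair ℝ (p 0) (p 1)
  have hlineMap : AffineMap.lineMap (p 0) (p 1) (c 1) ∈ L :=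
    hL ▸ AffineMap.lineMap_mem_affineSpan_pair (c 1) (p 0) (p 1)
  have hp2 : p 2 ∉ L := by
    simpa [hL, Set.image_pair] using hp.notMem_affineSpan_sdiff 2 {0, 1}
  have hfar : 0 < Metric.infDist (p 2) L :=
    (L.closed_of_finiteDimensional.notMem_iff_infDist_pos ⟨p 0, hp0⟩).1 hp2
  have hxn : xn = AffineMap.lineMap (p 0) (p 1) (c 1) + c 2 • (p 2 - p 0) := by
    have hc0 : c 0 = 1 - c 1 - c 2 := by rw [Fin.sum_univ_three] at hc1; linarith
    rw [← hcx, Finset.univ.affineCombination_eq_linear_combination p c hc1, Fin.sum_univ_three,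
      AffineMap.lineMap_apply_module, hc0]
    module
  have hcross : Metric.infDist xn L ≤ ‖xn - xo‖ := by
    rw [← dist_eq_norm']
    exact Metric.infDist_le_dist_of_mem_segment_of_mem
      ⟨1 - t, t, by linarith, ht0, by ring, rfl⟩ hyL
  rw [le_div_iff₀ hfar, ← Real.norm_eq_abs]
  calc ‖c 2‖ * Metric.infDist (p 2) L ≤ Metric.infDist xn L := by
        rw [hxn]; exact L.norm_mul_infDist_le_infDist_add_smul_sub hp0 hlineMap (p 2) (c 2)
    _ ≤ ‖xn - xo‖ := hcross
end

section
/- (APIC P2G conserves angular momentum.) Let there be particles p with masses m_p, positions x_p ∈ ℝ³, velocities v_p ∈ ℝ³, and 3×3 real affine matrices B_p, and grid nodes i with positions x_i ∈ ℝ³, with transfer weights w_{p,i} ∈ ℝ satisfying, for every p: Σᵢ w_{p,i} = 1 and Σᵢ w_{p,i} (x_i − x_p) = 0. Suppose each D_p := Σᵢ w_{p,i} (x_i − x_p)(x_i − x_p)ᵀ is invertible, and define grid momenta P_i := Σ_p w_{p,i} m_p (v_p + B_p D_p⁻¹ (x_i − x_p)). Then Σᵢ x_i × P_i = Σ_p (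 x_p × (m_p v_p) + m_p τ(B_p) ), where τ(A) := (A₃₂ − A₂₃, A₁₃ − A₃₁, A₂₁ − A₁₂) ∈ ℝ³ for a 3×3 matrix A, and × is the cross product in ℝ³. -/
/-!
Split each node position as `x_i = x_p + d_i`. Partition of unity and linear reproduction make
the weighted sums of `x_i` and `d_i` equal to `x_p` and `0`, which turns the `v_p` part of the
transferred momentum into `x_p × m_p v_p` and kills the cross term `x_p × C d_i`. What remains is
`m_p ∑ᵢ w_{p,i} d_i × C d_i`, and `d × C d = τ(C d dᵀ)`, so by linearity of `τ` it equals
`m_p τ(C D_p) = m_p τ(B_p)` for `C = B_p D_p⁻¹`.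
-/

open Matrix Finset

variable {R : Type*} [CommRing R]

def axialVec : Matrix (Fin 3) (Fin 3) R →ₗ[R] Fin 3 → R where
  toFun A := ![A 2 1 - A 1 2, A 0 2 - A 2 0, A 1 0 - A 0 1]
  map_add' A A' := by ext k; fin_cases k <;> simp <;> ring
  map_smul' c A := by ext k; fin_cases k <;> simp <;> ring

theorem cross_mulVec_self (C : Matrix (Fin 3) (Fin 3) R) (a : Fin 3 → R) :
    a ⨯₃ (C *ᵥ a) = axialVec (C * vecMulVec a a) := by
  ext k
  fin_cases k <;>
    simp [axialVec, cross_apply, mulVec, dotProduct, mul_apply, vecMulVec_apply,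
      Fin.sum_univ_three] <;> ring

variable {ι : Type*} [Fintype ι]

theorem sum_smul_eq_of_sum_smul_sub_eq_zero {M : Type*} [AddCommGroup M] [Module R M]
    {w : ι → R} {y : ι → M} {x : M} (hw : ∑ i, w i = 1) (hlin : ∑ i, w i • (y i - x) = 0) :
    ∑ i, w i • y i = x := by
  simpa [smul_sub, Finset.sum_sub_distrib, ← Finset.sum_smul, hw, sub_eq_zero] using hlin

theorem sum_smul_cross_affine_momentum {w : ι → R} {y : ι → Fin 3 → R} {x v : Fin 3 → R}
    {m : R} {B C D : Matrix (Fin 3) (Fin 3) R}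
    (hw : ∑ i, w i = 1) (hlin : ∑ i, w i • (y i - x) = 0)
    (hD : D = ∑ i, w i • vecMulVec (y i - x) (y i - x)) (hCD : C * D = B) :
    ∑ i, w i • (y i ⨯₃ (m • (v + C *ᵥ (y i - x)))) = x ⨯₃ (m • v) + m • axialVec B := by
  have hterm : ∀ i, w i • (y i ⨯₃ (m • (v + C *ᵥ (y i - x)))) =
      m • (w i • y i) ⨯₃ v + m • x ⨯₃ (C *ᵥ (w i • (y i - x))) +
        m • axialVec (C * w i • vecMulVec (y i - x) (y i - x)) := by
    intro i
    set d := y i - x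
    rw [show y i = x + d from (add_sub_cancel x (y i)).symm]
    simp only [map_add, map_smul, LinearMap.add_apply, LinearMap.smul_apply, mulVec_smul,
      Matrix.mul_smul, cross_mulVec_self, smul_add, smul_comm (w i) m]
    abel
  calc ∑ i, w i • (y i ⨯₃ (m • (v + C *ᵥ (y i - x))))
      = m • (∑ i, w i • y i) ⨯₃ v + m • x ⨯₃ (C *ᵥ ∑ i, w i • (y i - x)) +
          m • axialVec (C * ∑ i, w i • vecMulVec (y i - x) (y i - x)) := by
        simp only [hterm, sum_add_distrib, ← smul_sum, map_sum, mulVec_sum, Matrix.mul_sum,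
          LinearMap.sum_apply]
    _ = x ⨯₃ (m • v) + m • axialVec B := by
        rw [sum_smul_eq_of_sum_smul_sub_eq_zero hw hlin, hlin, ← hD, hCD]
        simp

/-- APIC particle-to-grid transfer conserves angular momentum: the total grid angular
momentum after P2G equals the total particle angular momentum
`∑ p, (x_p × m_p v_p + m_p τ(B_p))`. -/
theorem apic_p2g_conserves_angular_momentum
    {nP nG : ℕ}
    (m : Fin nP → ℝ) (xP : Fin nP → Fin 3 → ℝ) (v : Fin nP → Fin 3 → ℝ)
    (B : Fin nP → Matrix (Fin 3) (Fin 3) ℝ)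
    (xG : Fin nG → Fin 3 → ℝ)
    (w : Fin nP → Fin nG → ℝ)
    (hpart : ∀ p, ∑ i, w p i = 1)
    (hlin : ∀ p, ∑ i, w p i • (xG i - xP p) = 0)
    (D : Fin nP → Matrix (Fin 3) (Fin 3) ℝ)
    (hD : ∀ p, D p = ∑ i, w p i • Matrix.vecMulVec (xG i - xP p) (xG i - xP p))
    (hDinv : ∀ p, IsUnit (D p))
    (P : Fin nG → Fin 3 → ℝ)
    (hP : ∀ i, P i = ∑ p, w p i • (m p • (v p + (B p * (D p)⁻¹) *ᵥ (xG i - xP p))))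
    (τ : Matrix (Fin 3) (Fin 3) ℝ → Fin 3 → ℝ)
    (hτ : ∀ A, τ A = ![A 2 1 - A 1 2, A 0 2 - A 2 0, A 1 0 - A 0 1]) :
    ∑ i, xG i ⨯₃ P i = ∑ p, (xP p ⨯₃ (m p • v p) + m p • τ (B p)) := by
  have hτ_eq : τ = axialVec := funext hτ
  have hCD : ∀ p, B p * (D p)⁻¹ * D p = B p := fun p => by
    rw [Matrix.mul_assoc, Matrix.nonsing_inv_mul _ ((isUnit_iff_isUnit_det _).mp (hDinv p)),
      Matrix.mul_one]
  calc ∑ i, xG i ⨯₃ P i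
      = ∑ p, ∑ i, w p i • (xG i ⨯₃ (m p • (v p + (B p * (D p)⁻¹) *ᵥ (xG i - xP p)))) := by
        simp only [hP, map_sum, map_smul]
        exact Finset.sum_comm
    _ = ∑ p, (xP p ⨯₃ (m p • v p) + m p • τ (B p)) := by
        rw [hτ_eq]
        exact sum_congr rfl fun p _ =>
          sum_smul_cross_affine_momentum (hpart p) (hlin p) (hD p) (hCD p)
end

section
/- (APIC G2P conserves angular momentum.) Let there be grid nodes i with positions x_i ∈ ℝ³ and velocities ṽ_i ∈ ℝ³, and particles p with masses m_p and positions x_p ∈ ℝ³, with transfer weights w_{p,i} ∈ ℝ. Define grid masses m_i := Σ_p w_{p,i} m_p, updated particle velocities v_p' := Σᵢ w_{p,i} ṽ_i, and updated affine matrices B_p' := Σᵢ w_{p,i} ṽ_i (x_i − x_p)ᵀ. Then Σ_p ( x_p × (m_p v_p') + m_p τ(B_p') ) = Σᵢ x_i × (m_i ṽ_i), where τ(A) := (A₃₂ − A₂₃, A₁₃ − A₃₁, A₂₁ − A₁₂) ∈ ℝ³ for a 3×3 matrix A, and × is the cross product in ℝ³. -/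
/-!
The only identity needed is `τ(v uᵀ) = u × v`. Since `τ` is linear, the affine term of particle `p`
contributes `Σᵢ w_{p,i} (x_i − x_p) × ṽ_i`, and adding the translational term
`x_p × Σᵢ w_{p,i} ṽ_i` cancels the `x_p` part, leaving `Σᵢ w_{p,i} x_i × ṽ_i`. Summing over `p`
and exchanging the two sums collects the grid masses.
-/

open Matrix Finset

variable {R : Type*} [CommRing R] {ι : Type*}

def axialVector : Matrix (Fin 3) (Fin 3) R →ₗ[R] Fin 3 → R where
  toFun A := ![A 2 1 - A 1 2, A 0 2 - A 2 0, A 1 0 - A 0 1]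
  map_add' A B := by ext i; fin_cases i <;> simp <;> ring
  map_smul' c A := by ext i; fin_cases i <;> simp <;> ring

theorem axialVector_vecMulVec (a b : Fin 3 → R) : axialVector (vecMulVec a b) = b ⨯₃ a := by
  ext i
  fin_cases i <;> simp [axialVector, vecMulVec_apply, cross_apply] <;> ring

theorem cross_sum_add_axialVector_sum (s : Finset ι) (x : Fin 3 → R) (w : ι → R)
    (y v : ι → Fin 3 → R) :
    x ⨯₃ (∑ i ∈ s, w i • v i) + axialVector (∑ i ∈ s, w i • vecMulVec (v i) (y i - x))
      = ∑ i ∈ s, w i • (y i ⨯₃ v i) := by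
  simp only [map_sum, map_smul, axialVector_vecMulVec, map_sub, LinearMap.sub_apply,
    smul_sub, sum_sub_distrib]
  abel

/-- APIC grid-to-particle transfer conserves angular momentum: with grid masses
`m_i = ∑ p, w_{p,i} m_p`, interpolated velocities `v_p' = ∑ i, w_{p,i} ṽ_i` and affine
matrices `B_p' = ∑ i, w_{p,i} ṽ_i (x_i − x_p)ᵀ`, the total particle angular momentum
`∑ p, (x_p × m_p v_p' + m_p τ(B_p'))` equals the grid total `∑ i, x_i × m_i ṽ_i`. -/
theorem apic_g2p_conserves_angular_momentum
    {nP nG : ℕ}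
    (m : Fin nP → ℝ) (xP : Fin nP → Fin 3 → ℝ)
    (xG : Fin nG → Fin 3 → ℝ) (vG : Fin nG → Fin 3 → ℝ)
    (w : Fin nP → Fin nG → ℝ)
    (mG : Fin nG → ℝ)
    (hmG : ∀ i, mG i = ∑ p, w p i * m p)
    (v' : Fin nP → Fin 3 → ℝ)
    (hv' : ∀ p, v' p = ∑ i, w p i • vG i)
    (B' : Fin nP → Matrix (Fin 3) (Fin 3) ℝ)
    (hB' : ∀ p, B' p = ∑ i, w p i • Matrix.vecMulVec (vG i) (xG i - xP p))
    (τ : Matrix (Fin 3) (Fin 3) ℝ → Fin 3 → ℝ)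
    (hτ : ∀ A, τ A = ![A 2 1 - A 1 2, A 0 2 - A 2 0, A 1 0 - A 0 1]) :
    ∑ p, (xP p ⨯₃ (m p • v' p) + m p • τ (B' p)) = ∑ i, xG i ⨯₃ (mG i • vG i) := by
  have hτ_eq : τ = axialVector := funext hτ
  have particle (p : Fin nP) : xP p ⨯₃ (m p • v' p) + m p • τ (B' p)
      = ∑ i, (w p i * m p) • (xG i ⨯₃ vG i) := by
    rw [hτ_eq, map_smul, ← smul_add, hv', hB', cross_sum_add_axialVector_sum, smul_sum]
    simp only [smul_smul, mul_comm]
  simp only [particle]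
  rw [sum_comm]
  simp only [hmG, sum_smul, map_sum, map_smul]
end
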